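/- For α, β, v ∈ A* and finite F ⊆ A*, the element t = s_α E(F;v) s_β* of I(X) satisfies t t* = E(F ∪ {βv}; αv) and t* t = E(F ∪ {αv}; βv). -/

import Mathlib

open Function

/-- The one-sided shift map on `ℕ → A`. -/
def shft {A : Type*} (x : ℕ → A) : ℕ → A := fun n => x (n + 1)

/-- Concatenation of a finite word `w` with an infinite word `x`. -/
def wcat {A : Type*} (w : List A) (x : ℕ → A) : ℕ → A :=
  fun n => w.getD n (x (n - w.length))

/-- Partial bijections on `ℕ → A` modelled as relations (sets of pairs (input, output)). -/
abbrev PB (A : Type*) := Set ((ℕ → A) × (ℕ → A))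

/-- Composition on the largest possible domain: `rcomp r s` applies `s` first, then `r`
(i.e. the semigroup product `r · s`). -/
def rcomp {A : Type*} (r s : PB A) : PB A := {p | ∃ y, (p.1, y) ∈ s ∧ (y, p.2) ∈ r}

/-- Inverse of a partial bijection. -/
def rinv {A : Type*} (r : PB A) : PB A := {p | (p.2, p.1) ∈ r}

/-- The identity map on a subset `U`. -/
def idOn {A : Type*} (U : Set (ℕ → A)) : PB A := {p | p.1 ∈ U ∧ p.2 = p.1}

/-- The partial bijection `s_μ : x ↦ μx` on `{x ∈ X : μx ∈ X}`. -/
def sMap {A : Type*} (X : Set (ℕ → A)) (μ : List A) : PB A :=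
  {p | p.1 ∈ X ∧ wcat μ p.1 ∈ X ∧ p.2 = wcat μ p.1}

/-- The cylinder set `C(v) = {vx : x ∈ A^ℕ} ∩ X`. -/
def Cyl {A : Type*} (X : Set (ℕ → A)) (v : List A) : Set (ℕ → A) :=
  {y | y ∈ X ∧ ∃ x, y = wcat v x}

/-- `C(μ,ν) = {νx ∈ X : μx ∈ X}`. -/
def Cmn {A : Type*} (X : Set (ℕ → A)) (μ ν : List A) : Set (ℕ → A) :=
  {y | ∃ x, y = wcat ν x ∧ y ∈ X ∧ wcat μ x ∈ X}

/-- `C(F;v) = {vx ∈ X : fx ∈ X for all f ∈ F}`. -/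
def CFv {A : Type*} (X : Set (ℕ → A)) (F : Finset (List A)) (v : List A) : Set (ℕ → A) :=
  {y | ∃ x, y = wcat v x ∧ y ∈ X ∧ ∀ f ∈ F, wcat f x ∈ X}

/-- The idempotent `E(F;v) = Id_{C(F;v)}`. -/
def Efv {A : Type*} (X : Set (ℕ → A)) (F : Finset (List A)) (v : List A) : PB A :=
  idOn (CFv X F v)

/-- The set `E_X = {E(F;v)} ∪ {0}` of idempotents. -/
def EXset {A : Type*} (X : Set (ℕ → A)) : Set (PB A) :=
  {r | r = ∅ ∨ ∃ (F : Finset (List A)) (v : List A), r = Efv X F v}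

/-- The element `s_α E(F;v) s_β^*` of `I(X)`. -/
def elt {A : Type*} (X : Set (ℕ → A)) (α : List A) (F : Finset (List A)) (v β : List A) :
    PB A :=
  rcomp (rcomp (sMap X α) (Efv X F v)) (rinv (sMap X β))

/-- The inverse semigroup `S_X = {s_α E(F;v) s_β^*} ∪ {0}` (closed form). -/
def SXset {A : Type*} (X : Set (ℕ → A)) : Set (PB A) :=
  {r | r = ∅ ∨ ∃ (α β v : List A) (F : Finset (List A)), r = elt X α F v β}

/-- `α` and `β` are in lowest terms: they do not both end with the same letter. -/
def LowTerms {A : Type*} (α β : List A) : Prop :=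
  ∀ a : A, ¬(α.getLast? = some a ∧ β.getLast? = some a)

/-- A word viewed as an element of the free group on `A`. -/
def wgrp {A : Type*} (w : List A) : FreeGroup A := (w.map FreeGroup.of).prod

/-- Natural partial order on partial bijections: `s ≤ t` iff `t s^* s = s`. -/
def rle {A : Type*} (s t : PB A) : Prop := rcomp t (rcomp (rinv s) s) = s

/-- `P_k(x) = {μ ∈ A^k : μx ∈ X}`. -/
def Pk {A : Type*} (X : Set (ℕ → A)) (k : ℕ) (x : ℕ → A) : Set (List A) :=
  {μ | μ.length = k ∧ wcat μ x ∈ X}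

/-- `l`-past equivalence: `P_r(x) = P_r(y)` for all `r ≤ l`. -/
def pastEq {A : Type*} (X : Set (ℕ → A)) (l : ℕ) (x y : ℕ → A) : Prop :=
  ∀ r ≤ l, Pk X r x = Pk X r y

/-- The relation `x ~_{(k,l)} y`. -/
def klEq {A : Type*} (X : Set (ℕ → A)) (k l : ℕ) (x y : ℕ → A) : Prop :=
  (∀ i < k, x i = y i) ∧ pastEq X l (shft^[k] x) (shft^[k] y)

/-!
Every pair in `t = s_α E(F;v) s_β*` has the form `(βvx, αvx)`, where `x` ranges over the
infinite words with `fx ∈ X` for `f ∈ F` and `αvx, βvx ∈ X`; shift invariance of `X` supplies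
the intermediate point `vx ∈ X`. Since `x ↦ αvx` is injective, `t` is a partial injection, so
`t* t` is the identity on the domain of `t`, which is `C(F ∪ {αv}; βv)`. Exchanging `α` and `β`
inverts `t`, which gives `t t*`.
-/

section PartialBijection

variable {A : Type*}

@[simp]
lemma rinv_rinv (r : PB A) : rinv (rinv r) = r := rfl

lemma rcomp_rinv_self_eq_idOn (r : PB A) (hr : ∀ p ∈ r, ∀ q ∈ r, p.2 = q.2 → p.1 = q.1) :
    rcomp (rinv r) r = idOn (Prod.fst '' r) := by
  ext ⟨x, x'⟩
  simp only [rcomp, rinv, idOn, Set.mem_ofPred_eq, Set.mem_image, Prod.exists, exists_and_right,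
    exists_eq_right]
  constructor
  · rintro ⟨y, hxy, hx'y⟩
    exact ⟨⟨y, hxy⟩, hr _ hx'y _ hxy rfl⟩
  · rintro ⟨⟨y, hxy⟩, rfl⟩
    exact ⟨y, hxy, hxy⟩

end PartialBijection

section Words

variable {A : Type*}

lemma wcat_append (w u : List A) (x : ℕ → A) : wcat (w ++ u) x = wcat w (wcat u x) := by
  funext n
  simp only [wcat, List.length_append, List.getD_eq_getElem?_getD, List.getElem?_append]
  rcases lt_or_ge n w.length with h | h
  · simp [h]
  · rw [if_neg (by omega), List.getElem?_eq_none h, Nat.sub_sub]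
    simp

lemma shft_wcat_cons (a : A) (w : List A) (x : ℕ → A) : shft (wcat (a :: w) x) = wcat w x := by
  funext n
  simp [shft, wcat]

lemma shft_iterate_wcat (w : List A) (x : ℕ → A) : shft^[w.length] (wcat w x) = x := by
  induction w with
  | nil => funext n; simp [wcat]
  | cons a w ih => rw [List.length_cons, iterate_succ_apply, shft_wcat_cons, ih]

lemma wcat_injective (w : List A) : Injective (wcat w) := by
  intro x y h
  rw [← shft_iterate_wcat w x, h, shft_iterate_wcat]

end Words

section Elt

variable {A : Type*} {X : Set (ℕ → A)}

lemma mem_elt_iff (hXsh : Set.MapsTo shft X X) (α β v : List A) (F : Finset (List A))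
    (p : (ℕ → A) × (ℕ → A)) :
    p ∈ elt X α F v β ↔ ∃ x, (∀ f ∈ F, wcat f x ∈ X) ∧ wcat (β ++ v) x ∈ X ∧
      wcat (α ++ v) x ∈ X ∧ p.1 = wcat (β ++ v) x ∧ p.2 = wcat (α ++ v) x := by
  simp only [elt, rcomp, rinv, sMap, Efv, idOn, CFv, Set.mem_ofPred_eq, wcat_append]
  constructor
  · rintro ⟨y, ⟨-, hβ, hp1⟩, z, ⟨⟨x, rfl, -, hF⟩, rfl⟩, -, hα, hp2⟩
    exact ⟨x, hF, hβ, hα, hp1, hp2⟩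
  · rintro ⟨x, hF, hβ, hα, hp1, hp2⟩
    have hv : wcat v x ∈ X := by simpa only [shft_iterate_wcat] using hXsh.iterate β.length hβ
    exact ⟨wcat v x, ⟨hv, hβ, hp1⟩, wcat v x, ⟨⟨x, rfl, hv, hF⟩, rfl⟩, hv, hα, hp2⟩

lemma rinv_elt (hXsh : Set.MapsTo shft X X) (α β v : List A) (F : Finset (List A)) :
    rinv (elt X α F v β) = elt X β F v α := by
  ext ⟨y, z⟩
  simp only [rinv, Set.mem_ofPred_eq, mem_elt_iff hXsh]
  exact exists_congr fun x => by tauto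

lemma fst_image_elt [DecidableEq A] (hXsh : Set.MapsTo shft X X) (α β v : List A)
    (F : Finset (List A)) :
    Prod.fst '' elt X α F v β = CFv X (insert (α ++ v) F) (β ++ v) := by
  ext y
  simp only [Set.mem_image, mem_elt_iff hXsh, CFv, Set.mem_ofPred_eq, Finset.forall_mem_insert]
  constructor
  · rintro ⟨p, ⟨x, hF, hβ, hα, hp1, -⟩, rfl⟩
    exact ⟨x, hp1, hp1 ▸ hβ, hα, hF⟩
  · rintro ⟨x, rfl, hβ, hα, hF⟩
    exact ⟨(wcat (β ++ v) x, wcat (α ++ v) x), ⟨x, hF, hβ, hα, rfl, rfl⟩, rfl⟩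

lemma rcomp_rinv_elt_self [DecidableEq A] (hXsh : Set.MapsTo shft X X) (α β v : List A)
    (F : Finset (List A)) :
    rcomp (rinv (elt X α F v β)) (elt X α F v β) = Efv X (insert (α ++ v) F) (β ++ v) := by
  rw [rcomp_rinv_self_eq_idOn, fst_image_elt hXsh, Efv]
  intro p hp q hq h
  obtain ⟨x, -, -, -, hp1, hp2⟩ := (mem_elt_iff hXsh α β v F p).mp hp
  obtain ⟨x', -, -, -, hq1, hq2⟩ := (mem_elt_iff hXsh α β v F q).mp hq
  obtain rfl : x = x' := wcat_injective _ (hp2.symm.trans (h.trans hq2))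
  exact hp1.trans hq1.symm

end Elt

theorem stmt5_general {A : Type*} [DecidableEq A]
    (X : Set (ℕ → A)) (hXsh : ∀ x ∈ X, shft x ∈ X)
    (α β v : List A) (F : Finset (List A)) :
    rcomp (elt X α F v β) (rinv (elt X α F v β)) = Efv X (insert (β ++ v) F) (α ++ v) ∧
    rcomp (rinv (elt X α F v β)) (elt X α F v β) = Efv X (insert (α ++ v) F) (β ++ v) := by
  refine ⟨?_, rcomp_rinv_elt_self hXsh α β v F⟩
  rw [← rinv_elt hXsh β α, rinv_rinv]
  exact rcomp_rinv_elt_self hXsh β α v F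

theorem stmt5 {A : Type*} [Fintype A] [DecidableEq A] [TopologicalSpace A] [DiscreteTopology A]
    (X : Set (ℕ → A)) (hXcl : IsClosed X) (hXsh : ∀ x ∈ X, shft x ∈ X)
    (α β v : List A) (F : Finset (List A)) :
    rcomp (elt X α F v β) (rinv (elt X α F v β)) = Efv X (insert (β ++ v) F) (α ++ v) ∧
    rcomp (rinv (elt X α F v β)) (elt X α F v β) = Efv X (insert (α ++ v) F) (β ++ v) :=
  stmt5_general X hXsh α β v F
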